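/- arXiv:2601.14464 — 3 statements merged into one kernel-verified Lean document; each statement's English description precedes it below -/
import Mathlib

section
/- Let g be a probability measure on the response-type space T = (𝒵 → 𝒳) × (𝒳 → Y) that is consistent with the observed sub-densities, i.e. for every z ∈ 𝒵, x ∈ 𝒳 and measurable B ⊆ Y, g {t | t.1 z = x and t.2 x ∈ B} = ∫_B φ z x dμ. Then for every x ∈ 𝒳, every nonempty subset Z̃ ⊆ 𝒵 and every measurable B ⊆ Y: g {t | (t.1 z = x for all z ∈ Z̃) and t.2 x ∈ B} ≤ ∫_B (fun y => min over z ∈ Z̃ of φ z x y) dμ. In particular, taking B = Y, the g-mass of the sufficient-takers group {t | t.1 z = x for all z ∈ Z̃} is at most Ψ_{x,Z̃} := ∫_Y (min over z ∈ Z̃ of φ z x) dμ. -/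
open MeasureTheory
open scoped ENNReal NNReal

/-! The law `ν` of the outcome `t.2 x` on the sufficient-takers group is dominated, for each
`z ∈ Zt`, by the observed sub-density `φ z x`, since the group lies inside `{t | t.1 z = x}`.
A measure dominated by `μ.withDensity f` and by `μ.withDensity g` is dominated by
`μ.withDensity (f ⊓ g)`: split the space along `{f ≤ g}` and use the sharper bound on each
piece. Induction over `Zt` then bounds `ν` by the minimum of the sub-densities. -/

namespace MeasureTheory.Measure

variable {α : Type*} [MeasurableSpace α] {μ ν : Measure α}

theorem le_withDensity_inf {f g : α → ℝ≥0∞} (hf : Measurable f) (hg : Measurable g)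
    (hνf : ν ≤ μ.withDensity f) (hνg : ν ≤ μ.withDensity g) :
    ν ≤ μ.withDensity (f ⊓ g) := by
  refine le_iff.2 fun B hB => ?_
  set C := {a | f a ≤ g a}
  have hC : MeasurableSet C := measurableSet_le hf hg
  calc ν B = ν (B ∩ C) + ν (B \ C) := (measure_inter_add_sdiff B hC).symm
    _ ≤ ∫⁻ a in B ∩ C, f a ∂μ + ∫⁻ a in B \ C, g a ∂μ := by
        gcongr
        · exact (hνf (B ∩ C)).trans_eq (withDensity_apply _ (hB.inter hC))
        · exact (hνg (B \ C)).trans_eq (withDensity_apply _ (hB.diff hC))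
    _ = ∫⁻ a in B ∩ C, (f ⊓ g) a ∂μ + ∫⁻ a in B \ C, (f ⊓ g) a ∂μ := by
        congr 1
        · exact setLIntegral_congr_fun (hB.inter hC) fun a ha => (inf_eq_left.2 ha.2).symm
        · exact setLIntegral_congr_fun (hB.diff hC) fun a ha =>
            (inf_eq_right.2 (le_of_not_ge ha.2)).symm
    _ = μ.withDensity (f ⊓ g) B := by
        rw [lintegral_inter_add_sdiff _ B hC, withDensity_apply _ hB]

theorem le_withDensity_biInf {ι : Type*} {s : Finset ι} (hs : s.Nonempty) {f : ι → α → ℝ≥0∞}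
    (hf : ∀ i ∈ s, Measurable (f i)) (hν : ∀ i ∈ s, ν ≤ μ.withDensity (f i)) :
    ν ≤ μ.withDensity (fun a => ⨅ i ∈ s, f i a) := by
  classical
  induction hs using Finset.Nonempty.cons_induction with
  | singleton i => simpa using hν i (Finset.mem_singleton_self i)
  | cons i s hi hs ih =>
    simp only [Finset.cons_eq_insert, Finset.iInf_insert]
    have hmem : i ∈ Finset.cons i s hi := Finset.mem_cons_self i s
    refine le_withDensity_inf (f := f i) (hf i hmem) ?_ (hν i hmem)
      (ih (fun j hj => hf j (Finset.mem_cons_of_mem hj)) fun j hj => hν j (Finset.mem_cons_of_mem hj))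
    exact Measurable.biInf _ s.countable_toSet fun j hj => hf j (Finset.mem_cons_of_mem hj)

end MeasureTheory.Measure

open MeasureTheory.Measure in
theorem response_type_sufficient_takers_bound_general
    {𝒵 : Type*}
    {𝒳 : Type*} [MeasurableSpace 𝒳]
    {Y : Type*} [MeasurableSpace Y] (μ : Measure Y)
    (φ : 𝒵 → 𝒳 → Y → NNReal) (hφ : ∀ z x, Measurable (φ z x))
    (g : Measure ((𝒵 → 𝒳) × (𝒳 → Y)))
    (hcons : ∀ (z : 𝒵) (x : 𝒳) (B : Set Y), MeasurableSet B →
      g {t | t.1 z = x ∧ t.2 x ∈ B} = ∫⁻ y in B, (φ z x y : ℝ≥0∞) ∂μ) :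
    ∀ (x : 𝒳) (Zt : Finset 𝒵), Zt.Nonempty →
      (∀ B : Set Y, MeasurableSet B →
        g {t | (∀ z ∈ Zt, t.1 z = x) ∧ t.2 x ∈ B} ≤
          ∫⁻ y in B, (⨅ z ∈ Zt, (φ z x y : ℝ≥0∞)) ∂μ) ∧
      g {t | ∀ z ∈ Zt, t.1 z = x} ≤ ∫⁻ y, (⨅ z ∈ Zt, (φ z x y : ℝ≥0∞)) ∂μ := by
  intro x Zt hZt
  set takers := {t : (𝒵 → 𝒳) × (𝒳 → Y) | ∀ z ∈ Zt, t.1 z = x}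
  have hout : Measurable fun t : (𝒵 → 𝒳) × (𝒳 → Y) => t.2 x :=
    (measurable_pi_apply x).comp measurable_snd
  set ν := (g.restrict takers).map fun t => t.2 x
  have hν_apply : ∀ B, MeasurableSet B → ν B = g {t | (∀ z ∈ Zt, t.1 z = x) ∧ t.2 x ∈ B} :=
    fun B hB => by
      rw [map_apply hout hB, restrict_apply (hout hB), Set.inter_comm]
      rfl
  have hν_le : ν ≤ μ.withDensity fun y => ⨅ z ∈ Zt, (φ z x y : ℝ≥0∞) := by
    refine le_withDensity_biInf hZt (fun z _ => (hφ z x).coe_nnreal_ennreal) fun z hz => ?_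
    refine le_iff.2 fun B hB => ?_
    rw [hν_apply B hB, withDensity_apply _ hB, ← hcons z x B hB]
    exact measure_mono fun t ht => ⟨ht.1 z hz, ht.2⟩
  have hbound : ∀ B, MeasurableSet B → g {t | (∀ z ∈ Zt, t.1 z = x) ∧ t.2 x ∈ B} ≤
      ∫⁻ y in B, (⨅ z ∈ Zt, (φ z x y : ℝ≥0∞)) ∂μ := fun B hB => by
    rw [← hν_apply B hB, ← withDensity_apply _ hB]
    exact hν_le B
  refine ⟨hbound, ?_⟩
  simpa [takers] using hbound Set.univ MeasurableSet.univ

/-- If a probability measure `g` on the response-type space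
`T = (𝒵 → 𝒳) × (𝒳 → Y)` is consistent with the observed sub-densities `φ`, then for every
treatment value `x`, every nonempty subset `Zt` of instrument values and every measurable
`B`, the `g`-mass of the set of response types that realize `x` at every instrument value
in `Zt` with potential outcome in `B` is bounded by the integral over `B` of the pointwise
minimum of the sub-densities; in particular (taking `B = univ`) the mass of the
sufficient-takers group is at most `Ψ_{x,Zt}`. -/
theorem response_type_sufficient_takers_bound
    {𝒵 : Type*} [Fintype 𝒵] [Nonempty 𝒵]
    {𝒳 : Type*} [Fintype 𝒳] [Nonempty 𝒳] [MeasurableSpace 𝒳] [MeasurableSingletonClass 𝒳]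
    {Y : Type*} [MeasurableSpace Y] (μ : Measure Y)
    (φ : 𝒵 → 𝒳 → Y → NNReal) (hφ : ∀ z x, Measurable (φ z x))
    (g : Measure ((𝒵 → 𝒳) × (𝒳 → Y))) [IsProbabilityMeasure g]
    (hcons : ∀ (z : 𝒵) (x : 𝒳) (B : Set Y), MeasurableSet B →
      g {t | t.1 z = x ∧ t.2 x ∈ B} = ∫⁻ y in B, (φ z x y : ℝ≥0∞) ∂μ) :
    ∀ (x : 𝒳) (Zt : Finset 𝒵), Zt.Nonempty →
      (∀ B : Set Y, MeasurableSet B →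
        g {t | (∀ z ∈ Zt, t.1 z = x) ∧ t.2 x ∈ B} ≤
          ∫⁻ y in B, (⨅ z ∈ Zt, (φ z x y : ℝ≥0∞)) ∂μ) ∧
      g {t | ∀ z ∈ Zt, t.1 z = x} ≤ ∫⁻ y, (⨅ z ∈ Zt, (φ z x y : ℝ≥0∞)) ∂μ :=
  response_type_sufficient_takers_bound_general μ φ hφ g hcons
end

section
/- Let R ⊆ X × X be a set of ruled-out instrument-response types, write x ⊵ x' for (x,x') ∈ R, and for S ⊆ X let Lᶜ(S) = {x' ∈ X | ∃ s ∈ S, ¬(s ⊵ x')}. Then the following are equivalent. (i) There exists a probability measure g on T consistent with the data whose instrument-response marginal satisfies p_g tᶻ = 0 whenever (tᶻ 0, tᶻ 1) ∈ R. (ii) Both of the following families of inequalities hold: (1) for every S ⊆ X, Σ_{x ∈ S} ∫_Y φ 0 x dμ ≤ Σ_{x' ∈ Lᶜ(S)} ∫_Y φ 1 x' dμ; and (2) for every S ⊆ X and every pair of disjoint sets Λ, Λ' ⊆ X with Λ ∪ Λ' = Lᶜ(S) such that Λ' is nonempty, Λ' ⊆ S, for every x' ∈ Λ' the set Lᶜ({x'})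 \ {x'} is contained in Λ, and Lᶜ(S \ Λ') ⊆ Λ, one has Σ_{x ∈ S} ∫_Y φ 0 x dμ ≤ Σ_{x ∈ Λ} ∫_Y φ 1 x dμ + Σ_{x ∈ Λ'} Ψ x. -/
/-!
Both sides are equivalent to the existence of a coupling `m` of the outcome masses
`x ↦ ∫ φ 0 x` and `x ↦ ∫ φ 1 x` that vanishes on `R` and puts mass at most `Ψ x` on each diagonal
cell `(x, x)`. The instrument-response marginal of a consistent `g` is such a coupling: under the
type `(x, x)` the same outcome `t.2 x` is observed under both instrument values, so its law lies
below both densities. Conversely, a coupling is realised by splitting each outcome law into pieces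
of the prescribed masses and gluing the two pieces of every cell into a measure on `X → Y`.

A coupling is a transport plan with capacity `0` on `R`, `Ψ x` on the diagonal and none elsewhere.
By the supply–demand theorem such a plan exists iff every set `S` of sources satisfies the cut
condition: in a plan of maximal total flow an unsaturated source would make the sources reachable
from it in the residual graph violate that condition. The capacity of the cut at `S` is the sum of
`∫ φ 1` over the sinks in `Lᶜ(S)`, with `Ψ` in place of `∫ φ 1` at the sinks `Λ'` reached from `S`
only along their own diagonal; this gives inequality (1) when `Λ'` is empty and (2) otherwise.
-/

open MeasureTheory
open scoped ENNReal NNReal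

/-- The complement of the common lower contour of `S` under the relation `R`:
the set of `x'` such that some `s ∈ S` does **not** dominate `x'` according to `R`. -/
def lowerContourCompl {X : Type*} [Fintype X] (R : X → X → Prop) [DecidableRel R]
    (S : Finset X) : Finset X :=
  Finset.univ.filter (fun x' => ∃ s ∈ S, ¬ R s x')

open Finset Filter Topology

lemma eventually_add_mul_le {x y z : ℝ} (hle : x ≤ z) (hlt : 0 < y → x < z) :
    ∀ᶠ t in 𝓝[>] (0 : ℝ), x + t * y ≤ z := by
  rcases le_or_gt y 0 with hy | hy
  · filter_upwards [self_mem_nhdsWithin] with t ht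
    nlinarith [mul_nonpos_of_nonneg_of_nonpos (le_of_lt ht) hy]
  · have hlim : Tendsto (fun t => x + t * y) (𝓝[>] 0) (𝓝 x) :=
      ((continuous_const.add (continuous_id.mul continuous_const)).tendsto' 0 x
        (by simp)).mono_left nhdsWithin_le_nhds
    filter_upwards [hlim.eventually (gt_mem_nhds (hlt hy))] with t ht using ht.le

namespace Transport

variable {ι κ : Type*}

lemma sum_add_ite_row [Fintype κ] [DecidableEq ι] [DecidableEq κ] (d : ι → κ → ℝ) (i i' : ι)
    (j : κ) (c : ℝ) :
    ∑ j', (d i' j' + if i' = i ∧ j' = j then c else 0) =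
      ∑ j', d i' j' + if i' = i then c else 0 := by
  simp [sum_add_distrib, ite_and]

lemma sum_add_ite_col [Fintype ι] [DecidableEq ι] [DecidableEq κ] (d : ι → κ → ℝ) (i : ι)
    (j j' : κ) (c : ℝ) :
    ∑ i', (d i' j' + if i' = i ∧ j' = j then c else 0) =
      ∑ i', d i' j' + if j' = j then c else 0 := by
  simp [sum_add_distrib, ite_and]

variable [Fintype κ] {a : ι → ℝ} {b : κ → ℝ} {cap m : ι → κ → ℝ}

variable (a cap m) in
structure IsFeasibleDir (d : ι → κ → ℝ) : Prop where
  lt_cap : ∀ i j, 0 < d i j → m i j < cap i j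
  pos : ∀ i j, d i j < 0 → 0 < m i j
  row_lt : ∀ i, 0 < ∑ j, d i j → ∑ j, m i j < a i

lemma isFeasibleDir_zero : IsFeasibleDir a cap m 0 :=
  ⟨fun _ _ h => absurd h (lt_irrefl 0), fun _ _ h => absurd h (lt_irrefl 0),
    fun _ h => by simp at h⟩

lemma IsFeasibleDir.add_single [DecidableEq ι] [DecidableEq κ] {d : ι → κ → ℝ}
    (hd : IsFeasibleDir a cap m d) {i : ι} {j : κ} {c : ℝ}
    (hcap : 0 < c → m i j < cap i j) (hpos : c < 0 → 0 < m i j)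
    (hrow : 0 < ∑ j', d i j' + c → ∑ j', m i j' < a i) :
    IsFeasibleDir a cap m fun i' j' => d i' j' + if i' = i ∧ j' = j then c else 0 where
  lt_cap i' j' h := by
    by_cases hij : i' = i ∧ j' = j
    · obtain ⟨rfl, rfl⟩ := hij
      simp only [and_self, if_true] at h
      rcases lt_or_ge 0 c with hc | hc
      · exact hcap hc
      · exact hd.lt_cap i' j' (by linarith)
    · simp only [hij, if_false, add_zero] at h
      exact hd.lt_cap i' j' h
  pos i' j' h := by
    by_cases hij : i' = i ∧ j' = j
    · obtain ⟨rfl, rfl⟩ := hij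
      simp only [and_self, if_true] at h
      rcases lt_or_ge c 0 with hc | hc
      · exact hpos hc
      · exact hd.pos i' j' (by linarith)
    · simp only [hij, if_false, add_zero] at h
      exact hd.pos i' j' h
  row_lt i' h := by
    rw [sum_add_ite_row] at h
    by_cases hi : i' = i
    · subst hi
      exact hrow (by simpa using h)
    · exact hd.row_lt i' (by simpa [hi] using h)

variable (cap m) in
def ResidualAdj : ι ⊕ κ → ι ⊕ κ → Prop
  | .inl i, .inr j => m i j < cap i j
  | .inr j, .inl i => 0 < m i j
  | _, _ => False

variable (a cap m) in
def Reachable (v : ι ⊕ κ) : Prop :=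
  ∃ i, ∑ j, m i j < a i ∧ Relation.ReflTransGen (ResidualAdj cap m) (.inl i) v

lemma Reachable.of_adj {u v : ι ⊕ κ} (hu : Reachable a cap m u) (huv : ResidualAdj cap m u v) :
    Reachable a cap m v :=
  let ⟨i, hi, hiu⟩ := hu
  ⟨i, hi, hiu.tail huv⟩

variable [Fintype ι]

variable (a cap m) in
/-- The last disjunct says that row `i` can take a further small push: it is unsaturated, or `d`
drains it. -/
def HasAugmentingDir : ι ⊕ κ → Prop
  | .inl i => ∃ d, IsFeasibleDir a cap m d ∧ (∀ j, ∑ i', d i' j = 0) ∧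
      (∑ j, m i j < a i ∨ ∑ j, d i j < 0)
  | .inr j => ∃ d, IsFeasibleDir a cap m d ∧ 0 < ∑ i, d i j ∧ ∀ j' ≠ j, ∑ i, d i j' = 0

lemma HasAugmentingDir.of_adj {u v : ι ⊕ κ} (hu : HasAugmentingDir a cap m u)
    (huv : ResidualAdj cap m u v) : HasAugmentingDir a cap m v := by
  classical
  match u, v, hu, huv with
  | .inl i, .inr j, ⟨d, hd, hcol, hrow⟩, (hlt : m i j < cap i j) =>
    -- if row `i` is saturated, `c` is small enough not to overfill it
    set c : ℝ := if ∑ j', d i j' < 0 then -(∑ j', d i j') / 2 else 1 with hc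
    have hc0 : 0 < c := by rw [hc]; split_ifs with h <;> linarith
    refine ⟨_, hd.add_single (fun _ => hlt) (fun h => absurd h hc0.not_gt) fun h => ?_, ?_, ?_⟩
    · rcases hrow with hrow | hrow
      · exact hrow
      · rw [hc, if_pos hrow] at h; linarith
    · rw [sum_add_ite_col, hcol, if_pos rfl, zero_add]
      exact hc0
    · intro j' hj'
      rw [sum_add_ite_col, hcol, if_neg hj', add_zero]
  | .inr j, .inl i, ⟨d, hd, hpos, hzero⟩, (hlt : 0 < m i j) =>
    refine ⟨_, hd.add_single (c := -∑ i', d i' j) (fun h => by linarith) (fun _ => hlt)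
      fun h => hd.row_lt i (by linarith), ?_, ?_⟩
    · intro j'
      rw [sum_add_ite_col]
      by_cases hj' : j' = j
      · subst hj'; simp
      · simp [hj', hzero j' hj']
    · by_cases h : 0 < ∑ j', d i j'
      · exact .inl (hd.row_lt i h)
      · right
        rw [sum_add_ite_row]
        simp only [if_true]
        linarith

lemma Reachable.hasAugmentingDir {v : ι ⊕ κ} (hv : Reachable a cap m v) :
    HasAugmentingDir a cap m v := by
  obtain ⟨i, hi, hiv⟩ := hv
  induction hiv with
  | refl => exact ⟨0, isFeasibleDir_zero, fun _ => by simp, .inl hi⟩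
  | tail _ huv ih => exact ih.of_adj huv

variable (a b cap) in
def partialPlans : Set (ι → κ → ℝ) :=
  Set.Icc 0 cap ∩ {m | (∀ i, ∑ j, m i j ≤ a i) ∧ ∀ j, ∑ i, m i j ≤ b j}

lemma isCompact_partialPlans : IsCompact (partialPlans a b cap) := by
  refine isCompact_Icc.inter_right ?_
  simp only [Set.ofPred_and, Set.ofPred_forall]
  exact (isClosed_iInter fun i => isClosed_le (by fun_prop) continuous_const).inter
    (isClosed_iInter fun j => isClosed_le (by fun_prop) continuous_const)

lemma eventually_add_smul_mem_partialPlans {d : ι → κ → ℝ} (hm : m ∈ partialPlans a b cap)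
    (hd : IsFeasibleDir a cap m d) (hcol : ∀ j, 0 < ∑ i, d i j → ∑ i, m i j < b j) :
    ∀ᶠ t in 𝓝[>] (0 : ℝ), m + t • d ∈ partialPlans a b cap := by
  obtain ⟨⟨hm0, hmcap⟩, hrow, hcolle⟩ := hm
  have h0 : ∀ i j, ∀ᶠ t in 𝓝[>] (0 : ℝ), -m i j + t * -d i j ≤ 0 := fun i j =>
    eventually_add_mul_le (neg_nonpos.mpr (hm0 i j)) fun h =>
      neg_lt_zero.mpr (hd.pos i j (neg_pos.mp h))
  have hcap : ∀ i j, ∀ᶠ t in 𝓝[>] (0 : ℝ), m i j + t * d i j ≤ cap i j := fun i j =>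
    eventually_add_mul_le (hmcap i j) (hd.lt_cap i j)
  have hr : ∀ i, ∀ᶠ t in 𝓝[>] (0 : ℝ), ∑ j, m i j + t * ∑ j, d i j ≤ a i := fun i =>
    eventually_add_mul_le (hrow i) (hd.row_lt i)
  have hc : ∀ j, ∀ᶠ t in 𝓝[>] (0 : ℝ), ∑ i, m i j + t * ∑ i, d i j ≤ b j := fun j =>
    eventually_add_mul_le (hcolle j) (hcol j)
  filter_upwards [eventually_all.2 fun i => eventually_all.2 (h0 i),
    eventually_all.2 fun i => eventually_all.2 (hcap i), eventually_all.2 hr,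
    eventually_all.2 hc] with t h0 hcap hr hc
  refine ⟨⟨fun i j => ?_, fun i j => hcap i j⟩, fun i => ?_, fun j => ?_⟩
  · simpa using (by linarith [h0 i j] : 0 ≤ m i j + t * d i j)
  · simpa [sum_add_distrib, mul_sum] using hr i
  · simpa [sum_add_distrib, mul_sum] using hc j

lemma sum_col_eq_of_isMaxOn (hm : m ∈ partialPlans a b cap)
    (hmax : IsMaxOn (fun m => ∑ i, ∑ j, m i j) (partialPlans a b cap) m) {j : κ}
    (hj : Reachable a cap m (.inr j)) : ∑ i, m i j = b j := by
  classical
  by_contra hne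
  have hlt : ∑ i, m i j < b j := lt_of_le_of_ne (hm.2.2 j) hne
  obtain ⟨d, hd, hpos, hzero⟩ := hj.hasAugmentingDir
  have hcol : ∀ j', 0 < ∑ i, d i j' → ∑ i, m i j' < b j' := by
    intro j' h
    by_cases hj' : j' = j
    · exact hj' ▸ hlt
    · exact absurd (hzero j' hj') h.ne'
  obtain ⟨t, ht, htpos⟩ :=
    ((eventually_add_smul_mem_partialPlans hm hd hcol).and self_mem_nhdsWithin).exists
  have hgain : ∑ i, ∑ j', (m + t • d) i j' = ∑ i, ∑ j', m i j' + t * ∑ i, d i j := by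
    simp only [Pi.add_apply, Pi.smul_apply, smul_eq_mul, sum_add_distrib, ← mul_sum]
    rw [sum_comm (f := fun i j' => d i j'), sum_eq_single j fun j' _ hj' => hzero j' hj']
    simp
  have := hmax ht
  simp only [Set.mem_ofPred_eq, hgain] at this
  nlinarith [mul_pos (Set.mem_Ioi.mp htpos) hpos]

lemma sum_row_eq_of_isMaxOn
    (hcut : ∀ S : Finset ι, ∑ i ∈ S, a i ≤ ∑ j, min (b j) (∑ i ∈ S, cap i j))
    (hm : m ∈ partialPlans a b cap)
    (hmax : IsMaxOn (fun m => ∑ i, ∑ j, m i j) (partialPlans a b cap) m) (i : ι) :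
    ∑ j, m i j = a i := by
  classical
  by_contra hne
  have hlt : ∑ j, m i j < a i := lt_of_le_of_ne (hm.2.1 i) hne
  set S := univ.filter fun i => Reachable a cap m (.inl i)
  have hS : ∀ i, i ∈ S ↔ Reachable a cap m (.inl i) := by simp [S]
  have hS_lt : ∑ i ∈ S, ∑ j, m i j < ∑ i ∈ S, a i :=
    sum_lt_sum (fun i _ => hm.2.1 i) ⟨i, (hS i).2 ⟨i, hlt, .refl⟩, hlt⟩
  -- the reachable sources form a saturated cut: their edges to unreachable sinks are full,
  -- and reachable sinks are fed from them alone
  have hmin : ∀ j, min (b j) (∑ i ∈ S, cap i j) ≤ ∑ i ∈ S, m i j := by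
    intro j
    by_cases hj : Reachable a cap m (.inr j)
    · have hout : ∀ i ∉ S, m i j = 0 := fun i hi =>
        (hm.1.1 i j).antisymm' (not_lt.1 fun h => hi ((hS i).2 (hj.of_adj (v := .inl i) h)))
      rw [sum_subset (subset_univ S) fun i _ hi => hout i hi, sum_col_eq_of_isMaxOn hm hmax hj]
      exact min_le_left _ _
    · have hsat : ∀ i ∈ S, m i j = cap i j := fun i hi =>
        (hm.1.2 i j).antisymm (not_lt.1 fun h => hj (((hS i).1 hi).of_adj h))
      rw [sum_congr rfl hsat]
      exact min_le_right _ _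
  have hS_ge : ∑ i ∈ S, a i ≤ ∑ i ∈ S, ∑ j, m i j :=
    calc ∑ i ∈ S, a i ≤ ∑ j, min (b j) (∑ i ∈ S, cap i j) := hcut S
      _ ≤ ∑ j, ∑ i ∈ S, m i j := sum_le_sum fun j _ => hmin j
      _ = ∑ i ∈ S, ∑ j, m i j := sum_comm
  exact hS_lt.not_ge hS_ge

theorem exists_plan_of_cut (ha : 0 ≤ a) (hb : 0 ≤ b) (hcap : 0 ≤ cap)
    (hab : ∑ i, a i = ∑ j, b j)
    (hcut : ∀ S : Finset ι, ∑ i ∈ S, a i ≤ ∑ j, min (b j) (∑ i ∈ S, cap i j)) :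
    ∃ m : ι → κ → ℝ, 0 ≤ m ∧ m ≤ cap ∧ (∀ i, ∑ j, m i j = a i) ∧ ∀ j, ∑ i, m i j = b j := by
  obtain ⟨m, hm, hmax⟩ := (isCompact_partialPlans (a := a) (b := b) (cap := cap)).exists_isMaxOn
    ⟨0, ⟨le_rfl, hcap⟩, fun i => by simpa using ha i, fun j => by simpa using hb j⟩
    (f := fun m : ι → κ → ℝ => ∑ i, ∑ j, m i j) (by fun_prop)
  have hrow := sum_row_eq_of_isMaxOn hcut hm hmax
  have htotal : ∑ j, ∑ i, m i j = ∑ j, b j := by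
    rw [sum_comm, ← hab]
    exact sum_congr rfl fun i _ => hrow i
  exact ⟨m, hm.1.1, hm.1.2, hrow, fun j =>
    (sum_eq_sum_iff_of_le fun j _ => hm.2.2 j).1 htotal j (mem_univ j)⟩

end Transport

section Coupling

variable {X : Type*}

structure IsAdmissibleCoupling [Fintype X] (R : X → X → Prop) (a b ψ : X → ℝ≥0∞)
    (m : X → X → ℝ≥0∞) : Prop where
  sum_row : ∀ i, ∑ j, m i j = a i
  sum_col : ∀ j, ∑ i, m i j = b j
  eq_zero : ∀ i j, R i j → m i j = 0
  diag_le : ∀ x, m x x ≤ ψ x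

variable {R : X → X → Prop} [DecidableRel R] {a b ψ : X → ℝ≥0∞}

variable (R b ψ) in
/-- Off `R` and off the diagonal the cap `b j` never binds: column `j` carries total mass `b j`. -/
def overlapCap [DecidableEq X] (i j : X) : ℝ :=
  if R i j then 0 else if i = j then (ψ i).toReal else (b j).toReal

lemma overlapCap_nonneg [DecidableEq X] (i j : X) : 0 ≤ overlapCap R b ψ i j := by
  unfold overlapCap
  split_ifs <;> positivity

variable [Fintype X]

lemma mem_lowerContourCompl {S : Finset X} {x : X} :
    x ∈ lowerContourCompl R S ↔ ∃ s ∈ S, ¬ R s x := by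
  simp [lowerContourCompl]

namespace IsAdmissibleCoupling

variable {m : X → X → ℝ≥0∞}

lemma sum_eq_sum_lowerContourCompl (hm : IsAdmissibleCoupling R a b ψ m) (S : Finset X) :
    ∑ x ∈ S, a x = ∑ j ∈ lowerContourCompl R S, ∑ x ∈ S, m x j := by
  simp_rw [← hm.sum_row]
  rw [sum_comm]
  refine (sum_subset (subset_univ _) fun j _ hj => sum_eq_zero fun x hx => hm.eq_zero x j ?_).symm
  by_contra h
  exact hj (mem_lowerContourCompl.2 ⟨x, hx, h⟩)

lemma sum_le_sum_lowerContourCompl (hm : IsAdmissibleCoupling R a b ψ m) (S : Finset X) :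
    ∑ x ∈ S, a x ≤ ∑ x ∈ lowerContourCompl R S, b x := by
  rw [hm.sum_eq_sum_lowerContourCompl]
  exact sum_le_sum fun j _ => hm.sum_col j ▸ sum_le_sum_of_subset (subset_univ S)

lemma sum_le_sum_add_sum_overlap [DecidableEq X] (hm : IsAdmissibleCoupling R a b ψ m)
    {S Λ Λ' : Finset X} (hdisj : Disjoint Λ Λ')
    (hunion : Λ ∪ Λ' = lowerContourCompl R S) (hΛ'S : Λ' ⊆ S)
    (herase : ∀ x' ∈ Λ', (lowerContourCompl R {x'}).erase x' ⊆ Λ)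
    (hsub : lowerContourCompl R (S \ Λ') ⊆ Λ) :
    ∑ x ∈ S, a x ≤ ∑ x ∈ Λ, b x + ∑ x ∈ Λ', ψ x := by
  have hdom : ∀ x' ∈ Λ', ∀ x ∈ S, x ≠ x' → R x x' := by
    intro x' hx' x hx hne
    by_contra hR
    by_cases hxΛ' : x ∈ Λ'
    · refine disjoint_right.mp hdisj hx' (herase x hxΛ' (mem_erase.2 ⟨hne.symm, ?_⟩))
      exact mem_lowerContourCompl.2 ⟨x, mem_singleton_self x, hR⟩
    · exact disjoint_right.mp hdisj hx'
        (hsub (mem_lowerContourCompl.2 ⟨x, mem_sdiff.2 ⟨hx, hxΛ'⟩, hR⟩))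
  rw [hm.sum_eq_sum_lowerContourCompl, ← hunion, sum_union hdisj]
  gcongr with j hj j hj
  · exact hm.sum_col j ▸ sum_le_sum_of_subset (subset_univ S)
  · rw [sum_eq_single_of_mem j (hΛ'S hj) fun x hx hne => hm.eq_zero x j (hdom j hj x hx hne)]
    exact hm.diag_le j

end IsAdmissibleCoupling

section Sufficiency

variable [DecidableEq X]

variable (R) in
def selfWitnessed (S : Finset X) : Finset X :=
  (lowerContourCompl R S).filter fun x => ∀ s ∈ S, s ≠ x → R s x

lemma sum_le_sum_sdiff_selfWitnessed_add
    (h₁ : ∀ S : Finset X, ∑ x ∈ S, a x ≤ ∑ x ∈ lowerContourCompl R S, b x)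
    (h₂ : ∀ S Λ Λ' : Finset X, Disjoint Λ Λ' → Λ ∪ Λ' = lowerContourCompl R S →
      Λ'.Nonempty → Λ' ⊆ S → (∀ x' ∈ Λ', (lowerContourCompl R {x'}).erase x' ⊆ Λ) →
      lowerContourCompl R (S \ Λ') ⊆ Λ → ∑ x ∈ S, a x ≤ ∑ x ∈ Λ, b x + ∑ x ∈ Λ', ψ x)
    (S : Finset X) :
    ∑ x ∈ S, a x ≤ ∑ x ∈ lowerContourCompl R S \ selfWitnessed R S, b x +
      ∑ x ∈ selfWitnessed R S, ψ x := by
  set L := lowerContourCompl R S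
  set Λ' := selfWitnessed R S
  rcases Λ'.eq_empty_or_nonempty with hΛ' | hΛ'
  · simpa [hΛ'] using h₁ S
  have hΛ'L : Λ' ⊆ L := filter_subset _ _
  have hΛ'S : Λ' ⊆ S := by
    intro x hx
    obtain ⟨hxL, hdom⟩ := mem_filter.1 hx
    obtain ⟨s, hs, hR⟩ := mem_lowerContourCompl.1 hxL
    obtain rfl : s = x := by_contra fun hne => hR (hdom s hs hne)
    exact hs
  refine h₂ S (L \ Λ') Λ' sdiff_disjoint (sdiff_union_of_subset hΛ'L) hΛ' hΛ'S ?_ ?_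
  · intro x' hx' s hs
    obtain ⟨hsx', hsL⟩ := mem_erase.1 hs
    obtain ⟨w, hw, hR⟩ := mem_lowerContourCompl.1 hsL
    rw [mem_singleton] at hw
    subst hw
    refine mem_sdiff.2 ⟨mem_lowerContourCompl.2 ⟨w, hΛ'S hx', hR⟩, fun hsΛ' => ?_⟩
    exact hR ((mem_filter.1 hsΛ').2 w (hΛ'S hx') (Ne.symm hsx'))
  · intro x hx
    obtain ⟨s, hs, hR⟩ := mem_lowerContourCompl.1 hx
    obtain ⟨hsS, hsΛ'⟩ := mem_sdiff.1 hs
    refine mem_sdiff.2 ⟨mem_lowerContourCompl.2 ⟨s, hsS, hR⟩, fun hxΛ' => ?_⟩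
    have hsx : s ≠ x := fun h => hsΛ' (h ▸ hxΛ')
    exact hR ((mem_filter.1 hxΛ').2 s hsS hsx)

lemma sum_sdiff_selfWitnessed_add_le_sum_min (hψ : ∀ x, ψ x ≤ b x) (hb : ∀ x, b x ≠ ∞)
    (S : Finset X) :
    ∑ x ∈ lowerContourCompl R S \ selfWitnessed R S, (b x).toReal +
      ∑ x ∈ selfWitnessed R S, (ψ x).toReal ≤
        ∑ j, min (b j).toReal (∑ i ∈ S, overlapCap R b ψ i j) := by
  have hcap_le : ∀ j, ∀ i ∈ S, overlapCap R b ψ i j ≤ ∑ i ∈ S, overlapCap R b ψ i j :=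
    fun j i hi => single_le_sum (fun i _ => overlapCap_nonneg i j) hi
  calc _ ≤ ∑ j ∈ lowerContourCompl R S \ selfWitnessed R S,
          min (b j).toReal (∑ i ∈ S, overlapCap R b ψ i j) +
        ∑ j ∈ selfWitnessed R S, min (b j).toReal (∑ i ∈ S, overlapCap R b ψ i j) := by
        gcongr with j hj j hj
        · refine le_min le_rfl ?_
          obtain ⟨hjL, hj⟩ := mem_sdiff.1 hj
          obtain ⟨s, hs, hsj, hR⟩ : ∃ s ∈ S, s ≠ j ∧ ¬ R s j := by
            simpa [selfWitnessed, hjL] using hj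
          simpa [overlapCap, hR, hsj] using hcap_le j s hs
        · obtain ⟨hjL, hdom⟩ := mem_filter.1 hj
          obtain ⟨s, hs, hR⟩ := mem_lowerContourCompl.1 hjL
          obtain rfl : s = j := by_contra fun hne => hR (hdom s hs hne)
          refine le_min (ENNReal.toReal_mono (hb s) (hψ s)) ?_
          simpa [overlapCap, hR] using hcap_le s s hs
    _ = ∑ j ∈ (lowerContourCompl R S \ selfWitnessed R S) ∪ selfWitnessed R S,
          min (b j).toReal (∑ i ∈ S, overlapCap R b ψ i j) := (sum_union sdiff_disjoint).symm
    _ ≤ _ := sum_le_sum_of_subset_of_nonneg (subset_univ _) fun j _ _ =>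
          le_min ENNReal.toReal_nonneg (sum_nonneg fun i _ => overlapCap_nonneg i j)

theorem exists_isAdmissibleCoupling (hfin : ∑ x, b x ≠ ∞) (hab : ∑ x, a x = ∑ x, b x)
    (hψ : ∀ x, ψ x ≤ b x)
    (h₁ : ∀ S : Finset X, ∑ x ∈ S, a x ≤ ∑ x ∈ lowerContourCompl R S, b x)
    (h₂ : ∀ S Λ Λ' : Finset X, Disjoint Λ Λ' → Λ ∪ Λ' = lowerContourCompl R S →
      Λ'.Nonempty → Λ' ⊆ S → (∀ x' ∈ Λ', (lowerContourCompl R {x'}).erase x' ⊆ Λ) →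
      lowerContourCompl R (S \ Λ') ⊆ Λ → ∑ x ∈ S, a x ≤ ∑ x ∈ Λ, b x + ∑ x ∈ Λ', ψ x) :
    ∃ m, IsAdmissibleCoupling R a b ψ m := by
  have hb : ∀ x, b x ≠ ∞ := fun x => ENNReal.sum_ne_top.1 hfin x (mem_univ x)
  have ha : ∀ x, a x ≠ ∞ := fun x => ENNReal.sum_ne_top.1 (hab ▸ hfin) x (mem_univ x)
  have hψ' : ∀ x, ψ x ≠ ∞ := fun x => ne_top_of_le_ne_top (hb x) (hψ x)
  have hcut : ∀ S : Finset X, ∑ x ∈ S, (a x).toReal ≤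
      ∑ j, min (b j).toReal (∑ i ∈ S, overlapCap R b ψ i j) := by
    intro S
    refine le_trans ?_ (sum_sdiff_selfWitnessed_add_le_sum_min hψ hb S)
    rw [← ENNReal.toReal_sum fun x _ => ha x, ← ENNReal.toReal_sum fun x _ => hb x,
      ← ENNReal.toReal_sum fun x _ => hψ' x, ← ENNReal.toReal_add
        (ENNReal.sum_ne_top.2 fun x _ => hb x) (ENNReal.sum_ne_top.2 fun x _ => hψ' x)]
    exact ENNReal.toReal_mono (ENNReal.add_ne_top.2 ⟨ENNReal.sum_ne_top.2 fun x _ => hb x,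
      ENNReal.sum_ne_top.2 fun x _ => hψ' x⟩) (sum_le_sum_sdiff_selfWitnessed_add h₁ h₂ S)
  obtain ⟨m, hm0, hmcap, hrow, hcol⟩ := Transport.exists_plan_of_cut
    (fun x => ENNReal.toReal_nonneg) (fun x => ENNReal.toReal_nonneg) overlapCap_nonneg
    (by rw [← ENNReal.toReal_sum fun x _ => ha x, ← ENNReal.toReal_sum fun x _ => hb x, hab])
    hcut
  refine ⟨fun i j => ENNReal.ofReal (m i j), ⟨fun i => ?_, fun j => ?_, fun i j hR => ?_,
    fun x => ?_⟩⟩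
  · rw [← ENNReal.ofReal_sum_of_nonneg fun j _ => hm0 i j, hrow i, ENNReal.ofReal_toReal (ha i)]
  · rw [← ENNReal.ofReal_sum_of_nonneg fun i _ => hm0 i j, hcol j, ENNReal.ofReal_toReal (hb j)]
  · have := hmcap i j
    simp only [overlapCap, hR, if_true] at this
    simp [le_antisymm this (hm0 i j)]
  · refine ENNReal.ofReal_le_of_le_toReal ((hmcap x x).trans ?_)
    by_cases hR : R x x <;> simp [overlapCap, hR]

end Sufficiency

end Coupling

section Splitting

variable {α : Type*} [MeasurableSpace α]

lemma exists_le_measure_univ_eq (ν : Measure α) [IsFiniteMeasure ν] {c : ℝ≥0∞}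
    (hc : c ≤ ν Set.univ) : ∃ ρ ≤ ν, ρ Set.univ = c := by
  refine ⟨(c / ν Set.univ) • ν, fun s => ?_, ?_⟩
  · exact mul_le_of_le_one_left zero_le (ENNReal.div_le_of_le_mul (by simpa using hc))
  · rw [Measure.smul_apply, smul_eq_mul]
    rcases eq_or_ne (ν Set.univ) 0 with h | h
    · simp [h, le_antisymm (h ▸ hc) zero_le]
    · exact ENNReal.div_mul_cancel h (measure_ne_top ν _)

lemma exists_sum_eq_measure {ι : Type*} (ν : Measure α) [IsFiniteMeasure ν] (s : Finset ι)
    (w : ι → ℝ≥0∞) (hw : ∑ i ∈ s, w i = ν Set.univ) :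
    ∃ p : ι → Measure α, (∀ i ∈ s, p i Set.univ = w i) ∧ ∑ i ∈ s, p i = ν := by
  rcases eq_or_ne (ν Set.univ) 0 with h | h
  · have hw0 : ∀ i ∈ s, w i = 0 := (sum_eq_zero_iff.mp (hw.trans h))
    exact ⟨0, fun i hi => by simp [hw0 i hi], by simp [Measure.measure_univ_eq_zero.mp h]⟩
  refine ⟨fun i => (w i / ν Set.univ) • ν, fun i _ => ?_, ?_⟩
  · simp [ENNReal.div_mul_cancel h (measure_ne_top ν _)]
  · rw [← sum_smul]
    simp only [div_eq_mul_inv]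
    rw [← sum_mul, hw, ← div_eq_mul_inv, ENNReal.div_self h (measure_ne_top ν _), one_smul]

lemma exists_sum_eq_measure_of_le {ι : Type*} [Fintype ι] [DecidableEq ι] (ν ρ : Measure α)
    [IsFiniteMeasure ν] (hρ : ρ ≤ ν) (w : ι → ℝ≥0∞) (i₀ : ι)
    (hw : ∑ i, w i = ν Set.univ) (hρw : ρ Set.univ = w i₀) :
    ∃ p : ι → Measure α, p i₀ = ρ ∧ (∀ i, p i Set.univ = w i) ∧ ∑ i, p i = ν := by
  have : IsFiniteMeasure ρ := isFiniteMeasure_of_le ν hρ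
  have hrest : ∑ i ∈ univ \ {i₀}, w i = (ν - ρ) Set.univ := by
    rw [Measure.sub_apply MeasurableSet.univ hρ, ← hw,
      sum_eq_add_sum_sdiff_singleton_of_mem (mem_univ i₀), hρw,
      ENNReal.add_sub_cancel_left (hρw ▸ measure_ne_top ρ _)]
  obtain ⟨p, hp, hpsum⟩ := exists_sum_eq_measure (ν - ρ) _ w hrest
  refine ⟨Function.update p i₀ ρ, by simp, fun i => ?_, ?_⟩
  · rcases eq_or_ne i i₀ with rfl | hi
    · simpa using hρw
    · simpa [hi] using hp i (by simp [hi])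
  · rw [sum_update_of_mem (mem_univ i₀), hpsum, add_comm, Measure.sub_add_cancel_of_le hρ]

end Splitting

section Gluing

variable {X Y : Type*} [MeasurableSpace Y]

lemma exists_map_eval_eq_and_map_eval_eq [Nonempty Y] [DecidableEq X] (i j : X)
    (α β : Measure Y) [IsFiniteMeasure α] (hαβ : α Set.univ = β Set.univ)
    (hij : i = j → α = β) :
    ∃ F : Measure (X → Y), F.map (Function.eval i) = α ∧ F.map (Function.eval j) = β := by
  rcases eq_or_ne α 0 with rfl | hα
  · have hβ : β = 0 := Measure.measure_univ_eq_zero.mp (by simpa using hαβ.symm)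
    exact ⟨0, by simp, by simp [hβ]⟩
  have : IsFiniteMeasure β := ⟨hαβ ▸ measure_lt_top α _⟩
  have hα0 : α Set.univ ≠ 0 := by simpa using hα
  let e : Y × Y → X → Y := fun p =>
    Function.update (Function.update (fun _ => Classical.arbitrary Y) i p.1) j p.2
  have he : Measurable e := by fun_prop
  have hej : Function.eval j ∘ e = Prod.snd := by ext p; simp [e]
  have hscale : ∀ γ : Measure Y, (α Set.univ)⁻¹ • α Set.univ • γ = γ := fun γ => by
    rw [smul_smul, ENNReal.inv_mul_cancel hα0 (measure_ne_top α _), one_smul]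
  refine ⟨(α Set.univ)⁻¹ • (α.prod β).map e, ?_, ?_⟩
  · rcases eq_or_ne i j with rfl | hne
    · rw [← hij rfl]
      simp [Measure.map_map (measurable_pi_apply i) he, hej, hscale]
    · have hei : Function.eval i ∘ e = Prod.fst := by ext p; simp [e, Function.update_of_ne hne]
      simp [Measure.map_map (measurable_pi_apply i) he, hei, ← hαβ, hscale]
  · simp [Measure.map_map (measurable_pi_apply j) he, hej, hscale]

end Gluing

section CellMeasures

variable {X Y : Type*} [Fintype X] [MeasurableSpace Y] {μ : Measure Y} {φ : Fin 2 → X → Y → ℝ≥0}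

lemma exists_cell_measures [DecidableEq X] (hfin : ∀ k x, ∫⁻ y, (φ k x y : ℝ≥0∞) ∂μ ≠ ∞)
    {R : X → X → Prop} {m : X → X → ℝ≥0∞}
    (hm : IsAdmissibleCoupling R (fun x => ∫⁻ y, (φ 0 x y : ℝ≥0∞) ∂μ)
      (fun x => ∫⁻ y, (φ 1 x y : ℝ≥0∞) ∂μ)
      (fun x => ∫⁻ y, ((min (φ 0 x y) (φ 1 x y) : ℝ≥0) : ℝ≥0∞) ∂μ) m) :
    ∃ α β : X → X → Measure Y, (∀ x, α x x = β x x) ∧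
      (∀ x₀ x₁, α x₀ x₁ Set.univ = m x₀ x₁ ∧ β x₀ x₁ Set.univ = m x₀ x₁) ∧
      (∀ x, ∑ x₁, α x x₁ = μ.withDensity fun y => φ 0 x y) ∧
      (∀ x, ∑ x₀, β x₀ x = μ.withDensity fun y => φ 1 x y) := by
  set D : Fin 2 → X → Measure Y := fun k x => μ.withDensity fun y => φ k x y
  set Dmin : X → Measure Y := fun x => μ.withDensity fun y => (min (φ 0 x y) (φ 1 x y) : ℝ≥0)
  have hD : ∀ k x, IsFiniteMeasure (D k x) := fun k x => isFiniteMeasure_withDensity (hfin k x)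
  have hD_univ : ∀ k x, D k x Set.univ = ∫⁻ y, (φ k x y : ℝ≥0∞) ∂μ := fun k x => by
    simp [D]
  have hDmin_le : ∀ k x, Dmin x ≤ D k x := fun k x =>
    withDensity_mono (ae_of_all _ fun y => by fin_cases k <;> simp)
  -- the diagonal cell `(x, x)` gets a piece of the common part of both outcome laws
  have hρ : ∀ x, ∃ ρ ≤ Dmin x, ρ Set.univ = m x x := fun x =>
    have := isFiniteMeasure_of_le _ (hDmin_le 0 x)
    exists_le_measure_univ_eq (Dmin x) (by simpa [Dmin] using hm.diag_le x)
  choose ρ hρ_le hρ_univ using hρ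
  have hα := fun x => exists_sum_eq_measure_of_le (D 0 x) (ρ x) ((hρ_le x).trans (hDmin_le 0 x))
    (m x) x ((hm.sum_row x).trans (hD_univ 0 x).symm) (hρ_univ x)
  choose α hα_diag hα_univ hα_sum using hα
  have hβ := fun x => exists_sum_eq_measure_of_le (D 1 x) (ρ x) ((hρ_le x).trans (hDmin_le 1 x))
    (fun x₀ => m x₀ x) x ((hm.sum_col x).trans (hD_univ 1 x).symm) (hρ_univ x)
  choose β hβ_diag hβ_univ hβ_sum using hβ
  exact ⟨α, fun x₀ x₁ => β x₁ x₀, fun x => (hα_diag x).trans (hβ_diag x).symm,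
    fun x₀ x₁ => ⟨hα_univ x₀ x₁, hβ_univ x₁ x₀⟩, hα_sum, hβ_sum⟩

end CellMeasures

section Marginals

lemma sum_measure_preimage_singleton_inter {Ω β : Type*} [MeasurableSpace Ω] [MeasurableSpace β]
    [Fintype β] [MeasurableSingletonClass β] (ν : Measure Ω) {f : Ω → β} (hf : Measurable f)
    (E : Set Ω) : ∑ b, ν (f ⁻¹' {b} ∩ E) = ν E := by
  have := sum_measure_preimage_singleton (μ := ν.restrict E) univ
    fun b _ => hf (measurableSet_singleton b)
  simpa [Measure.restrict_apply (hf (measurableSet_singleton _))] using this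

variable {X Ω : Type*} [Fintype X] [MeasurableSpace X] [MeasurableSingletonClass X]
  [MeasurableSpace Ω]

lemma sum_measure_fst_eq_vecCons (ν : Measure ((Fin 2 → X) × Ω)) (x₀ : X) :
    ∑ x₁, ν {t | t.1 = ![x₀, x₁]} = ν {t | t.1 0 = x₀} := by
  rw [← sum_measure_preimage_singleton_inter ν (f := fun t => t.1 1) (by fun_prop)]
  congr! 2 with x₁
  ext t
  simp [funext_iff, Fin.forall_fin_two, and_comm]

lemma sum_measure_snd_eq_vecCons (ν : Measure ((Fin 2 → X) × Ω)) (x₁ : X) :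
    ∑ x₀, ν {t | t.1 = ![x₀, x₁]} = ν {t | t.1 1 = x₁} := by
  rw [← sum_measure_preimage_singleton_inter ν (f := fun t => t.1 0) (by fun_prop)]
  congr! 2 with x₀
  ext t
  simp [funext_iff, Fin.forall_fin_two]

end Marginals

section Consistency

variable {X Y : Type*} [MeasurableSpace X] [MeasurableSpace Y]

variable (μ : Measure Y) (φ : Fin 2 → X → Y → ℝ≥0) in
def IsConsistent (g : Measure ((Fin 2 → X) × (X → Y))) : Prop :=
  ∀ (k : Fin 2) (x : X) (B : Set Y), MeasurableSet B →
    g {t | t.1 k = x ∧ t.2 x ∈ B} = ∫⁻ y in B, (φ k x y : ℝ≥0∞) ∂μ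

variable {μ : Measure Y} {φ : Fin 2 → X → Y → ℝ≥0} {g : Measure ((Fin 2 → X) × (X → Y))}

namespace IsConsistent

lemma measure_fst_eq (hg : IsConsistent μ φ g) (k : Fin 2) (x : X) :
    g {t | t.1 k = x} = ∫⁻ y, (φ k x y : ℝ≥0∞) ∂μ := by
  simpa using hg k x Set.univ MeasurableSet.univ

lemma measure_diag_le (hg : IsConsistent μ φ g) (hφ : ∀ k x, Measurable (φ k x)) (x : X) :
    g {t | t.1 = ![x, x]} ≤ ∫⁻ y, ((min (φ 0 x y) (φ 1 x y) : ℝ≥0) : ℝ≥0∞) ∂μ := by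
  set A := {y | φ 0 x y ≤ φ 1 x y}
  have hA : MeasurableSet A := measurableSet_le (hφ 0 x) (hφ 1 x)
  have hC : MeasurableSet {t : (Fin 2 → X) × (X → Y) | t.2 x ∈ A} :=
    (measurable_pi_apply x).comp measurable_snd hA
  set E := {t : (Fin 2 → X) × (X → Y) | t.1 = ![x, x]}
  calc g E = g (E ∩ {t | t.2 x ∈ A}) + g (E \ {t | t.2 x ∈ A}) :=
        (measure_inter_add_sdiff E hC).symm
    _ ≤ g {t | t.1 0 = x ∧ t.2 x ∈ A} + g {t | t.1 1 = x ∧ t.2 x ∈ Aᶜ} := by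
        gcongr
        · exact fun t ⟨h₁, h₂⟩ => ⟨by simp [show t.1 = _ from h₁], h₂⟩
        · exact fun t ⟨h₁, h₂⟩ => ⟨by simp [show t.1 = _ from h₁], h₂⟩
    _ = ∫⁻ y in A, (φ 0 x y : ℝ≥0∞) ∂μ + ∫⁻ y in Aᶜ, (φ 1 x y : ℝ≥0∞) ∂μ := by
        rw [hg 0 x A hA, hg 1 x Aᶜ hA.compl]
    _ = ∫⁻ y in A, ((min (φ 0 x y) (φ 1 x y) : ℝ≥0) : ℝ≥0∞) ∂μ +
          ∫⁻ y in Aᶜ, ((min (φ 0 x y) (φ 1 x y) : ℝ≥0) : ℝ≥0∞) ∂μ := by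
        congr 1
        · exact setLIntegral_congr_fun hA fun y hy => by rw [min_eq_left hy]
        · exact setLIntegral_congr_fun hA.compl fun y hy => by
            rw [min_eq_right (le_of_not_ge (show ¬ φ 0 x y ≤ φ 1 x y from hy))]
    _ = _ := lintegral_add_compl _ hA

end IsConsistent

variable [Fintype X] [MeasurableSingletonClass X]

lemma IsConsistent.isAdmissibleCoupling {R : X → X → Prop} (hg : IsConsistent μ φ g)
    (hφ : ∀ k x, Measurable (φ k x))
    (hR : ∀ tz : Fin 2 → X, R (tz 0) (tz 1) → g {t | t.1 = tz} = 0) :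
    IsAdmissibleCoupling R (fun x => ∫⁻ y, (φ 0 x y : ℝ≥0∞) ∂μ)
      (fun x => ∫⁻ y, (φ 1 x y : ℝ≥0∞) ∂μ)
      (fun x => ∫⁻ y, ((min (φ 0 x y) (φ 1 x y) : ℝ≥0) : ℝ≥0∞) ∂μ)
      (fun x₀ x₁ => g {t | t.1 = ![x₀, x₁]}) where
  sum_row x := (sum_measure_fst_eq_vecCons g x).trans (hg.measure_fst_eq 0 x)
  sum_col x := (sum_measure_snd_eq_vecCons g x).trans (hg.measure_fst_eq 1 x)
  eq_zero x₀ x₁ h := hR ![x₀, x₁] (by simpa using h)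
  diag_le := hg.measure_diag_le hφ

end Consistency

section ResponseMeasure

variable {X Y : Type*} [MeasurableSpace Y] [Fintype X] [MeasurableSpace X]

noncomputable def responseMeasure (F : X → X → Measure (X → Y)) : Measure ((Fin 2 → X) × (X → Y)) :=
  ∑ x₀, ∑ x₁, (F x₀ x₁).map (Prod.mk ![x₀, x₁])

lemma responseMeasure_apply (F : X → X → Measure (X → Y)) {E : Set ((Fin 2 → X) × (X → Y))}
    (hE : MeasurableSet E) :
    responseMeasure F E = ∑ x₀, ∑ x₁, F x₀ x₁ (Prod.mk ![x₀, x₁] ⁻¹' E) := by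
  simp [responseMeasure, Measure.map_apply measurable_prodMk_left hE]

lemma responseMeasure_univ (F : X → X → Measure (X → Y)) :
    responseMeasure F Set.univ = ∑ x₀, ∑ x₁, F x₀ x₁ Set.univ := by
  simp [responseMeasure_apply F MeasurableSet.univ]

variable [MeasurableSingletonClass X]

lemma responseMeasure_fst_eq (F : X → X → Measure (X → Y)) (tz : Fin 2 → X) :
    responseMeasure F {t | t.1 = tz} = F (tz 0) (tz 1) Set.univ := by
  classical
  rw [responseMeasure_apply F (E := {t | t.1 = tz}) (measurable_fst (measurableSet_singleton tz))]
  have hpre : ∀ x₀ x₁, Prod.mk ![x₀, x₁] ⁻¹' {t : (Fin 2 → X) × (X → Y) | t.1 = tz} =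
      if x₀ = tz 0 ∧ x₁ = tz 1 then Set.univ else ∅ := by
    intro x₀ x₁
    split_ifs with h
    · ext f; simp [h.1, h.2, funext_iff, Fin.forall_fin_two]
    · ext f; simp [funext_iff, Fin.forall_fin_two]; tauto
  simp [hpre, apply_ite, ite_and]

variable {μ : Measure Y} {φ : Fin 2 → X → Y → ℝ≥0}

lemma isConsistent_responseMeasure {F : X → X → Measure (X → Y)} {α β : X → X → Measure Y}
    (hα : ∀ x₀ x₁, (F x₀ x₁).map (Function.eval x₀) = α x₀ x₁)
    (hβ : ∀ x₀ x₁, (F x₀ x₁).map (Function.eval x₁) = β x₀ x₁)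
    (hα_sum : ∀ x, ∑ x₁, α x x₁ = μ.withDensity fun y => φ 0 x y)
    (hβ_sum : ∀ x, ∑ x₀, β x₀ x = μ.withDensity fun y => φ 1 x y) :
    IsConsistent μ φ (responseMeasure F) := by
  classical
  intro k x B hB
  have hE : MeasurableSet {t : (Fin 2 → X) × (X → Y) | t.1 k = x ∧ t.2 x ∈ B} := by
    have h₁ : Measurable fun t : (Fin 2 → X) × (X → Y) => t.1 k := by fun_prop
    have h₂ : Measurable fun t : (Fin 2 → X) × (X → Y) => t.2 x := by fun_prop
    exact (h₁ (measurableSet_singleton x)).inter (h₂ hB)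
  have hpre : ∀ x₀ x₁, Prod.mk ![x₀, x₁] ⁻¹' {t : (Fin 2 → X) × (X → Y) | t.1 k = x ∧ t.2 x ∈ B} =
      if ![x₀, x₁] k = x then Function.eval x ⁻¹' B else ∅ := by
    intro x₀ x₁
    split_ifs with h <;> ext f <;> simp [h]
  have hmarg : ∀ x₀ x₁, F x₀ x₁ (Function.eval x ⁻¹' B) = (F x₀ x₁).map (Function.eval x) B :=
    fun x₀ x₁ => (Measure.map_apply (measurable_pi_apply x) hB).symm
  rw [responseMeasure_apply F hE, ← withDensity_apply _ hB]
  simp only [hpre, apply_ite, measure_empty, hmarg]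
  fin_cases k
  · rw [Fintype.sum_eq_single x fun x₀ hx₀ => by simp [hx₀]]
    simp [← hα_sum, hα]
  · rw [sum_comm]
    simp [← hβ_sum, hβ]

theorem exists_isConsistent_of_isAdmissibleCoupling [Nonempty Y] [DecidableEq X]
    (hmass : ∀ k : Fin 2, ∑ x : X, ∫⁻ y, (φ k x y : ℝ≥0∞) ∂μ = 1) {R : X → X → Prop}
    {m : X → X → ℝ≥0∞}
    (hm : IsAdmissibleCoupling R (fun x => ∫⁻ y, (φ 0 x y : ℝ≥0∞) ∂μ)
      (fun x => ∫⁻ y, (φ 1 x y : ℝ≥0∞) ∂μ)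
      (fun x => ∫⁻ y, ((min (φ 0 x y) (φ 1 x y) : ℝ≥0) : ℝ≥0∞) ∂μ) m) :
    ∃ g : Measure ((Fin 2 → X) × (X → Y)), IsProbabilityMeasure g ∧ IsConsistent μ φ g ∧
      ∀ tz : Fin 2 → X, R (tz 0) (tz 1) → g {t | t.1 = tz} = 0 := by
  have hfin : ∀ k x, ∫⁻ y, (φ k x y : ℝ≥0∞) ∂μ ≠ ∞ := fun k x =>
    ENNReal.sum_ne_top.1 ((hmass k).symm ▸ ENNReal.one_ne_top) x (mem_univ x)
  obtain ⟨α, β, hdiag, huniv, hα_sum, hβ_sum⟩ := exists_cell_measures hfin hm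
  have hm_fin : ∀ x₀ x₁, m x₀ x₁ ≠ ∞ := fun x₀ x₁ => ne_top_of_le_ne_top (hfin 0 x₀)
    ((hm.sum_row x₀) ▸ single_le_sum (fun _ _ => zero_le) (mem_univ x₁))
  have hF := fun x₀ x₁ =>
    have : IsFiniteMeasure (α x₀ x₁) := ⟨(huniv x₀ x₁).1.trans_lt (hm_fin x₀ x₁).lt_top⟩
    exists_map_eval_eq_and_map_eval_eq x₀ x₁ (α x₀ x₁) (β x₀ x₁)
      ((huniv x₀ x₁).1.trans (huniv x₀ x₁).2.symm) (by rintro rfl; exact hdiag x₀)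
  choose F hF₀ hF₁ using hF
  have hF_univ : ∀ x₀ x₁, F x₀ x₁ Set.univ = m x₀ x₁ := fun x₀ x₁ => by
    rw [← (huniv x₀ x₁).1, ← hF₀, Measure.map_apply (measurable_pi_apply x₀) MeasurableSet.univ,
      Set.preimage_univ]
  refine ⟨responseMeasure F, ⟨?_⟩, isConsistent_responseMeasure hF₀ hF₁ hα_sum hβ_sum,
    fun tz h => ?_⟩
  · simp_rw [responseMeasure_univ, hF_univ, hm.sum_row]
    exact hmass 0
  · rw [responseMeasure_fst_eq, hF_univ, hm.eq_zero _ _ h]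

end ResponseMeasure

theorem sharp_response_type_restriction_general
    {Y : Type*} [MeasurableSpace Y] [Nonempty Y] (μ : Measure Y)
    {X : Type*} [Fintype X] [DecidableEq X]
    [MeasurableSpace X] [MeasurableSingletonClass X]
    (φ : Fin 2 → X → Y → NNReal) (hφ : ∀ k x, Measurable (φ k x))
    (hmass : ∀ k : Fin 2, ∑ x : X, ∫⁻ y, (φ k x y : ℝ≥0∞) ∂μ = 1)
    (R : X → X → Prop) [DecidableRel R] :
    (∃ g : Measure ((Fin 2 → X) × (X → Y)), IsProbabilityMeasure g ∧
      (∀ (k : Fin 2) (x : X) (B : Set Y), MeasurableSet B →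
        g {t | t.1 k = x ∧ t.2 x ∈ B} = ∫⁻ y in B, (φ k x y : ℝ≥0∞) ∂μ) ∧
      (∀ tz : Fin 2 → X, R (tz 0) (tz 1) → g {t | t.1 = tz} = 0))
    ↔
    ((∀ S : Finset X,
        ∑ x ∈ S, ∫⁻ y, (φ 0 x y : ℝ≥0∞) ∂μ ≤
          ∑ x' ∈ lowerContourCompl R S, ∫⁻ y, (φ 1 x' y : ℝ≥0∞) ∂μ) ∧
      (∀ S Λ Λ' : Finset X, Disjoint Λ Λ' → Λ ∪ Λ' = lowerContourCompl R S →
        Λ'.Nonempty → Λ' ⊆ S →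
        (∀ x' ∈ Λ', (lowerContourCompl R {x'}).erase x' ⊆ Λ) →
        lowerContourCompl R (S \ Λ') ⊆ Λ →
        ∑ x ∈ S, ∫⁻ y, (φ 0 x y : ℝ≥0∞) ∂μ ≤
          (∑ x ∈ Λ, ∫⁻ y, (φ 1 x y : ℝ≥0∞) ∂μ) +
            ∑ x ∈ Λ', ∫⁻ y, ((min (φ 0 x y) (φ 1 x y) : NNReal) : ℝ≥0∞) ∂μ)) := by
  constructor
  · rintro ⟨g, -, hg, hR⟩
    have hm := IsConsistent.isAdmissibleCoupling hg hφ hR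
    exact ⟨hm.sum_le_sum_lowerContourCompl, fun S Λ Λ' hdisj hunion _ hΛ'S herase hsub =>
      hm.sum_le_sum_add_sum_overlap hdisj hunion hΛ'S herase hsub⟩
  · rintro ⟨h₁, h₂⟩
    obtain ⟨m, hm⟩ := exists_isAdmissibleCoupling (by rw [hmass 1]; exact ENNReal.one_ne_top)
      (by rw [hmass 0, hmass 1]) (fun x => lintegral_mono fun y => by simp) h₁ h₂
    exact exists_isConsistent_of_isAdmissibleCoupling hmass hm

/-- **Theorem 2, sharp observable implications of response-type restrictions
for binary instruments.** Existence of a probability measure on response types consistent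
with the data whose instrument-response marginal vanishes on the ruled-out types `R` is
equivalent to the generalized FOSD inequalities (1) together with the tightened
inequalities (2) involving the overlaps `Ψ x`. -/
theorem sharp_response_type_restriction
    {Y : Type*} [MeasurableSpace Y] [Nonempty Y] (μ : Measure Y) [SigmaFinite μ]
    {X : Type*} [Fintype X] [Nonempty X] [DecidableEq X]
    [MeasurableSpace X] [MeasurableSingletonClass X]
    (φ : Fin 2 → X → Y → NNReal) (hφ : ∀ k x, Measurable (φ k x))
    (hmass : ∀ k : Fin 2, ∑ x : X, ∫⁻ y, (φ k x y : ℝ≥0∞) ∂μ = 1)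
    (R : X → X → Prop) [DecidableRel R] :
    (∃ g : Measure ((Fin 2 → X) × (X → Y)), IsProbabilityMeasure g ∧
      (∀ (k : Fin 2) (x : X) (B : Set Y), MeasurableSet B →
        g {t | t.1 k = x ∧ t.2 x ∈ B} = ∫⁻ y in B, (φ k x y : ℝ≥0∞) ∂μ) ∧
      (∀ tz : Fin 2 → X, R (tz 0) (tz 1) → g {t | t.1 = tz} = 0))
    ↔
    ((∀ S : Finset X,
        ∑ x ∈ S, ∫⁻ y, (φ 0 x y : ℝ≥0∞) ∂μ ≤
          ∑ x' ∈ lowerContourCompl R S, ∫⁻ y, (φ 1 x' y : ℝ≥0∞) ∂μ) ∧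
      (∀ S Λ Λ' : Finset X, Disjoint Λ Λ' → Λ ∪ Λ' = lowerContourCompl R S →
        Λ'.Nonempty → Λ' ⊆ S →
        (∀ x' ∈ Λ', (lowerContourCompl R {x'}).erase x' ⊆ Λ) →
        lowerContourCompl R (S \ Λ') ⊆ Λ →
        ∑ x ∈ S, ∫⁻ y, (φ 0 x y : ℝ≥0∞) ∂μ ≤
          (∑ x ∈ Λ, ∫⁻ y, (φ 1 x y : ℝ≥0∞) ∂μ) +
            ∑ x ∈ Λ', ∫⁻ y, ((min (φ 0 x y) (φ 1 x y) : NNReal) : ℝ≥0∞) ∂μ)) :=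
  sharp_response_type_restriction_general μ φ hφ hmass R
end

section
/- Let X be a finite type and let ⊵ᴿ and ⊵* be two relations on X. Suppose there exist a, b ∈ X with a ≠ b such that a ⊵* b but ¬(a ⊵ᴿ b). Then there exists a distribution h over latent preference types such that: h is ⊵ᴿ-submonotone; the induced distribution satisfies p_h(x,x') = 0 for every pair with x ⊵ᴿ x'; and h is not ⊵*-submonotone, i.e. h assigns positive weight to a pair of strict preferences that is not ⊵*-submonotone. -/
open scoped NNReal

/-- A latent preference type on `X`: a pair of strict preferences (strict total orders),
the unit's preferences at the two values of a binary instrument. -/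
def LatentPref (X : Type*) : Type _ :=
  {pr : (X → X → Prop) × (X → X → Prop) //
    IsStrictTotalOrder X pr.1 ∧ IsStrictTotalOrder X pr.2}

/-- A pair of preferences `(r₀, r₁)` is `⊵`-submonotone (no preference reversals against
the relation `tr`): whenever `tr a b` and `a` is `r₀`-preferred to `b`, `a` remains
`r₁`-preferred to `b`. -/
def SubmonoPair {X : Type*} (tr : X → X → Prop)
    (pr : (X → X → Prop) × (X → X → Prop)) : Prop :=
  ∀ a b : X, tr a b → pr.1 a b → pr.2 a b

/-- `m` is the greatest element of the strict preference `r` (the rational choice). -/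
def GreatestElem {X : Type*} (r : X → X → Prop) (m : X) : Prop :=
  ∀ x : X, x ≠ m → r m x

/-- A distribution over latent preference types: nonnegative weights of total mass one
(the set of latent preference types over a finite `X` is finite). -/
def IsPrefDist {X : Type*} (h : LatentPref X → ℝ≥0) : Prop :=
  ∑ᶠ pr : LatentPref X, h pr = 1

/-- A `⊵`-submonotone distribution over latent preference types: a distribution that
vanishes on every pair of preferences that is not `⊵`-submonotone. -/
def SubmonoDist {X : Type*} (tr : X → X → Prop) (h : LatentPref X → ℝ≥0) : Prop :=
  IsPrefDist h ∧ ∀ pr : LatentPref X, ¬ SubmonoPair tr pr.1 → h pr = 0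

/-- The distribution over instrument-response types induced by a distribution over latent
preference types: `inducedIR h x x'` is the total weight of latent preference types whose
first preference has greatest element `x` and whose second has greatest element `x'`. -/
noncomputable def inducedIR {X : Type*} (h : LatentPref X → ℝ≥0) (x x' : X) : ℝ≥0 :=
  ∑ᶠ (pr : LatentPref X)
    (_ : GreatestElem pr.1.1 x ∧ GreatestElem pr.1.2 x'), h pr

/-! Fix any strict total order on `X`. Let `r₀` move `a` to the top and `b` just below it, and let
`r₁` do the same with `a` and `b` exchanged. The pair `(r₀, r₁)` reverses the comparison of `a`
and `b` and no other, so it is `⊵ᴿ`-submonotone but not `⊵*`-submonotone, and the point mass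
on it has the instrument-response type `(a, b)`, which `⊵ᴿ` does not rule out. -/

open Function

section

variable {X : Type*}

theorem GreatestElem.unique {r : X → X → Prop} [Std.Asymm r] {m m' : X}
    (hm : GreatestElem r m) (hm' : GreatestElem r m') : m = m' := by
  by_contra hne
  exact asymm (hm m' (Ne.symm hne)) (hm' m hne)

section PointMass

variable [DecidableEq (LatentPref X)]

theorem isPrefDist_single (pr : LatentPref X) : IsPrefDist (Pi.single pr 1) := by
  rw [IsPrefDist, finsum_eq_single _ pr fun q hq => Pi.single_eq_of_ne hq _, Pi.single_eq_same]

theorem submonoDist_single {tr : X → X → Prop} {pr : LatentPref X} (h : SubmonoPair tr pr.1) :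
    SubmonoDist tr (Pi.single pr 1) :=
  ⟨isPrefDist_single pr, fun _ hq => Pi.single_eq_of_ne (by rintro rfl; exact hq h) _⟩

theorem inducedIR_single_eq_zero {pr : LatentPref X} {x x' : X}
    (h : ¬ (GreatestElem pr.1.1 x ∧ GreatestElem pr.1.2 x')) :
    inducedIR (Pi.single pr 1) x x' = 0 := by
  refine finsum_eq_zero_of_forall_eq_zero fun q => ?_
  rcases eq_or_ne q pr with rfl | hq
  · simp [h]
  · simp [Pi.single_eq_of_ne hq]

end PointMass

def prefOfKey {β : Type*} [LinearOrder β] (u : X → β) : X → X → Prop := (· > ·) on u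

theorem isStrictTotalOrder_prefOfKey {β : Type*} [LinearOrder β] {u : X → β} (hu : Injective u) :
    IsStrictTotalOrder X (prefOfKey u) :=
  hu.isStrictTotalOrder_onFun _

section TopTwo

variable [LinearOrder X] [DecidableEq X]

def topTwoKey (a b x : X) : Fin 3 ×ₗ X := toLex (if x = a then 2 else if x = b then 1 else 0, x)

def topTwoPref (a b : X) : X → X → Prop := prefOfKey (topTwoKey a b)

instance (a b : X) : IsStrictTotalOrder X (topTwoPref a b) :=
  isStrictTotalOrder_prefOfKey fun _ _ h => congrArg Prod.snd (toLex.injective h)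

theorem topTwoPref_iff {a b x y : X} :
    topTwoPref a b x y ↔ topTwoKey a b y < topTwoKey a b x :=
  Iff.rfl

theorem greatestElem_topTwoPref (a b : X) : GreatestElem (topTwoPref a b) a := fun x hx =>
  Prod.Lex.toLex_lt_toLex.2 <| Or.inl <| by simp only [hx, ↓reduceIte]; split_ifs <;> decide

theorem topTwoPref_left_right {a b : X} (hab : a ≠ b) : topTwoPref a b a b := by
  simp [topTwoPref_iff, topTwoKey, Prod.Lex.toLex_lt_toLex, hab.symm]

theorem topTwoPref_swap {a b x y : X} (h : topTwoPref a b x y) (hxy : ¬ (x = a ∧ y = b)) :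
    topTwoPref b a x y := by
  simp only [topTwoPref_iff, topTwoKey, Prod.Lex.toLex_lt_toLex] at h ⊢
  split_ifs at h ⊢ <;> simp_all

theorem submonoPair_topTwoPref {tr : X → X → Prop} {a b : X} (h : ¬ tr a b) :
    SubmonoPair tr (topTwoPref a b, topTwoPref b a) := by
  intro x y hxy hpref
  refine topTwoPref_swap hpref ?_
  rintro ⟨rfl, rfl⟩
  exact h hxy

theorem not_submonoPair_topTwoPref {tr : X → X → Prop} {a b : X} (hab : a ≠ b) (h : tr a b) :
    ¬ SubmonoPair tr (topTwoPref a b, topTwoPref b a) := fun hsub =>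
  asymm (topTwoPref_left_right hab.symm) (hsub a b h (topTwoPref_left_right hab))

def topTwoLatentPref (a b : X) : LatentPref X :=
  ⟨(topTwoPref a b, topTwoPref b a), inferInstance, inferInstance⟩

end TopTwo

end

theorem submonotone_weaker_relation_insufficient_general
    {X : Type*}
    (trR trS : X → X → Prop)
    (a b : X) (hab : a ≠ b) (hS : trS a b) (hR : ¬ trR a b) :
    ∃ h : LatentPref X → ℝ≥0, SubmonoDist trR h ∧
      (∀ x x' : X, trR x x' → inducedIR h x x' = 0) ∧
      ∃ pr : LatentPref X, ¬ SubmonoPair trS pr.1 ∧ 0 < h pr := by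
  classical
  let : LinearOrder X := IsWellOrder.linearOrder WellOrderingRel
  refine ⟨Pi.single (topTwoLatentPref a b) 1, submonoDist_single (submonoPair_topTwoPref hR),
    fun x x' hxx' => inducedIR_single_eq_zero ?_, topTwoLatentPref a b,
    not_submonoPair_topTwoPref hab hS, by simp⟩
  rintro ⟨hx, hx'⟩
  have hxa : x = a := GreatestElem.unique (r := topTwoPref a b) hx (greatestElem_topTwoPref a b)
  have hx'b : x' = b :=
    GreatestElem.unique (r := topTwoPref b a) hx' (greatestElem_topTwoPref b a)
  exact hR (hxa ▸ hx'b ▸ hxx')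

/-- **Lemma, part 2.** If the relation `⊵*` relates some pair `(a, b)` of
distinct elements not related by `⊵ᴿ`, then there is a distribution over latent preference
types that is `⊵ᴿ`-submonotone and induces a distribution over instrument-response types
vanishing on the pairs ruled out by `⊵ᴿ`, yet is not `⊵*`-submonotone: it assigns positive
weight to a pair of strict preferences that is not `⊵*`-submonotone. -/
theorem submonotone_weaker_relation_insufficient
    {X : Type*} [Fintype X]
    (trR trS : X → X → Prop)
    (a b : X) (hab : a ≠ b) (hS : trS a b) (hR : ¬ trR a b) :
    ∃ h : LatentPref X → ℝ≥0, SubmonoDist trR h ∧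
      (∀ x x' : X, trR x x' → inducedIR h x x' = 0) ∧
      ∃ pr : LatentPref X, ¬ SubmonoPair trS pr.1 ∧ 0 < h pr :=
  submonotone_weaker_relation_insufficient_general trR trS a b hab hS hR
end
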